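/- Let A, B, C ∈ ℝ² and A', B', C' ∈ ℝ² be triples of pairwise distinct points forming triangles with |AB| = |BC| and |A'B'| = |B'C'|, with equal corresponding angles (∠ABC = ∠A'B'C' and ∠BCA = ∠B'C'A'), and with all angles of the triangle ABC strictly less than 2π/3. Then the normalized Steiner deficit depends only on the angles and is strictly positive: (2|AB| − m(A,B,C))/|AB| = (2|A'B'| − m(A',B',C'))/|A'B'|, and 0 < 2|AB| − m(A,B,C) < 2|AB|. -/

import Mathlib

open Metric MeasureTheory EuclideanGeometry Filter Topology

noncomputable section

abbrev Plane := EuclideanSpace ℝ (Fin 2)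

/-- The condition `F_M(S) ≤ r`, i.e. every point of `M` is within distance `r` of `S`. -/
def MaxDistLE (M S : Set Plane) (r : ℝ) : Prop :=
  ∀ y ∈ M, Metric.infDist y S ≤ r

/-- `S` is a maximal distance minimizer for the compact set `M` and radius `r`. -/
def IsMinimizer (M : Set Plane) (r : ℝ) (S : Set Plane) : Prop :=
  IsClosed S ∧ IsConnected S ∧ MaxDistLE M S r ∧
    ∀ S' : Set Plane, IsClosed S' → IsConnected S' → MaxDistLE M S' r →
      μH[1] S ≤ μH[1] S'

/-- The Steiner length of a triple of points: the infimum of `H¹` over compact connected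
sets containing the three points. -/
def SteinerLength (X Y Z : Plane) : ℝ :=
  (sInf {m : ENNReal | ∃ K : Set Plane, IsCompact K ∧ IsConnected K ∧
      ({X, Y, Z} : Set Plane) ⊆ K ∧ m = μH[1] K}).toReal

/-!
A map `x ↦ B' + k • L (x - B)` with `L` a linear isometry is `k`-Lipschitz and has a
`k⁻¹`-Lipschitz inverse of the same form, so it multiplies `m` by `k`; by side–angle–side such a
map carries one isosceles triangle onto the other, which gives the first claim. The lower bound
`m(A,B,C) ≥ |AB|` holds because the 1-Lipschitz map `dist A` sends a connected set through `A` and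
`B` onto a superset of `[0, |AB|]`. For `m(A,B,C) < |AB| + |BC|`, let `w` be the sum of the unit
vectors along `BA` and `BC`: along `P = B + t • w` the derivative of `|PA| + |PB| + |PC|` at
`t = 0` is `‖w‖ - ‖w‖²`, negative because `∠ABC < 2π/3` means `‖w‖ > 1`.
-/

open scoped Real RealInnerProductSpace NNReal ENNReal

theorem HasDerivAt.exists_gt_lt_of_neg {f : ℝ → ℝ} {f' x : ℝ} (hf : HasDerivAt f f' x)
    (h : f' < 0) : ∃ y > x, f y < f x := by
  obtain ⟨y, hslope, hxy⟩ :=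
    ((hf.hasDerivWithinAt.liminf_right_slope_le h).and_eventually self_mem_nhdsWithin).exists
  refine ⟨y, hxy, ?_⟩
  rwa [slope_def_field, div_lt_iff₀ (sub_pos.2 hxy), zero_mul, sub_neg] at hslope

section InnerProductSpace

variable {V : Type*} [NormedAddCommGroup V] [InnerProductSpace ℝ V]

theorem HasDerivAt.norm {f : ℝ → V} {f' : V} {x : ℝ} (hf : HasDerivAt f f' x) (h0 : f x ≠ 0) :
    HasDerivAt (fun t => ‖f t‖) (⟪f x, f'⟫ / ‖f x‖) x := by
  have := hf.norm_sq.sqrt (by positivity)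
  simp only [Real.sqrt_sq (norm_nonneg _)] at this
  convert this using 1
  field_simp

theorem InnerProductGeometry.one_lt_norm_add_of_angle_lt {x y : V} (hx : x ≠ 0) (hy : y ≠ 0)
    (h : angle x y < 2 * π / 3) : 1 < ‖‖x‖⁻¹ • x + ‖y‖⁻¹ • y‖ := by
  have hcos : -(1 / 2) < Real.cos (angle x y) := by
    have h2pi3 : Real.cos (2 * π / 3) = -(1 / 2) := by
      rw [show 2 * π / 3 = π - π / 3 by ring, Real.cos_pi_sub, Real.cos_pi_div_three]
    rw [← h2pi3]
    exact Real.strictAntiOn_cos ⟨angle_nonneg x y, angle_le_pi x y⟩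
      ⟨by positivity, by linarith [Real.pi_pos]⟩ h
  have hsq : ‖‖x‖⁻¹ • x + ‖y‖⁻¹ • y‖ ^ 2 = 2 + 2 * Real.cos (angle x y) := by
    have := norm_ne_zero_iff.2 hx
    have := norm_ne_zero_iff.2 hy
    rw [norm_add_sq_real, real_inner_smul_left, real_inner_smul_right, norm_smul, norm_smul,
      cos_angle]
    simp only [norm_inv, norm_norm]
    field_simp
    ring
  nlinarith [norm_nonneg (‖x‖⁻¹ • x + ‖y‖⁻¹ • y)]

theorem exists_dist_add_dist_add_dist_lt {a b c : V} (ha : a ≠ b) (hc : c ≠ b)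
    (h : ∠ a b c < 2 * π / 3) : ∃ p, dist p a + dist p b + dist p c < dist b a + dist b c := by
  set u := a - b with hu_def
  set v := c - b with hv_def
  have hu : u ≠ 0 := sub_ne_zero.2 ha
  have hv : v ≠ 0 := sub_ne_zero.2 hc
  set w := ‖u‖⁻¹ • u + ‖v‖⁻¹ • v
  have hw : 1 < ‖w‖ := InnerProductGeometry.one_lt_norm_add_of_angle_lt hu hv h
  set φ : ℝ → ℝ := fun t => ‖t • w - u‖ + ‖t • w - v‖ + t * ‖w‖
  have hφ : HasDerivAt φ (‖w‖ - ‖w‖ ^ 2) 0 := by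
    have hline (z : V) : HasDerivAt (fun t : ℝ => t • w - z) w 0 := by
      simpa using ((hasDerivAt_id (0 : ℝ)).smul_const w).sub_const z
    refine ((((hline u).norm (by simpa using hu)).add ((hline v).norm (by simpa using hv))).add
      ((hasDerivAt_id (0 : ℝ)).mul_const ‖w‖)).congr_deriv ?_
    have hww : ‖w‖ ^ 2 = ⟪u, w⟫ / ‖u‖ + ⟪v, w⟫ / ‖v‖ :=
      calc ‖w‖ ^ 2 = ⟪‖u‖⁻¹ • u + ‖v‖⁻¹ • v, w⟫ := (real_inner_self_eq_norm_sq w).symm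
        _ = ⟪u, w⟫ / ‖u‖ + ⟪v, w⟫ / ‖v‖ := by
          rw [inner_add_left, real_inner_smul_left, real_inner_smul_left]; ring
    simp only [zero_smul, zero_sub, inner_neg_left, norm_neg, one_mul, hww]
    ring
  obtain ⟨t, ht, hφt⟩ := hφ.exists_gt_lt_of_neg (by nlinarith)
  refine ⟨b + t • w, ?_⟩
  have hdist (z : V) : dist (b + t • w) z = ‖t • w - (z - b)‖ := by
    rw [dist_eq_norm]; congr 1; abel
  calc dist (b + t • w) a + dist (b + t • w) b + dist (b + t • w) c = φ t := by
        simp only [φ, hdist, ← hu_def, ← hv_def, sub_self, sub_zero, norm_smul,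
          Real.norm_of_nonneg ht.le]
        ring
    _ < φ 0 := hφt
    _ = dist b a + dist b c := by simp [φ, u, v, dist_eq_norm, norm_sub_rev]

variable [FiniteDimensional ℝ V]

theorem LinearIsometry.exists_apply_eq_of_inner_eq {ι : Type*} [Fintype ι] {v w : ι → V}
    (h : ∀ i j, ⟪v i, v j⟫ = ⟪w i, w j⟫) : ∃ L : V →ₗᵢ[ℝ] V, ∀ i, L (v i) = w i := by
  classical
  set g := Fintype.linearCombination ℝ v
  set g' := Fintype.linearCombination ℝ w
  have hnorm : ∀ c, ‖g' c‖ = ‖g c‖ := fun c => by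
    rw [← sq_eq_sq₀ (norm_nonneg _) (norm_nonneg _), ← real_inner_self_eq_norm_sq,
      ← real_inner_self_eq_norm_sq]
    simp only [g, g', Fintype.linearCombination_apply, sum_inner, inner_sum, real_inner_smul_left,
      real_inner_smul_right, h]
  have hbdd : ∃ C, ∀ c, ‖g' c‖ ≤ C * ‖g c‖ := ⟨1, fun c => by rw [hnorm, one_mul]⟩
  -- `∑ cᵢ • v i ↦ ∑ cᵢ • w i` is well defined on the span of `v` because it preserves norms
  let L₀ : LinearMap.range g →ₗᵢ[ℝ] V :=
    { toLinearMap := (g'.compLeftInverse g).toLinearMap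
      norm_map' := by
        rintro ⟨_, c, rfl⟩
        simp [LinearMap.compLeftInverse_apply_of_bdd _ _ hbdd c _ rfl, hnorm] }
  refine ⟨L₀.extend, fun i => ?_⟩
  have hvi : g (Pi.single i 1) = v i := by simp [g]
  calc L₀.extend (v i) = g'.compLeftInverse g ⟨v i, _⟩ :=
        L₀.extend_apply ⟨v i, hvi ▸ g.mem_range_self _⟩
    _ = g' (Pi.single i 1) := LinearMap.compLeftInverse_apply_of_bdd _ _ hbdd _ _ hvi
    _ = w i := by simp [g']

theorem LinearIsometry.exists_apply_eq_apply_eq_of_angle_eq {x y x' y' : V}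
    (hx : ‖x'‖ = ‖x‖) (hy : ‖y'‖ = ‖y‖)
    (h : InnerProductGeometry.angle x' y' = InnerProductGeometry.angle x y) :
    ∃ L : V →ₗᵢ[ℝ] V, L x = x' ∧ L y = y' := by
  have hxy : ⟪x, y⟫ = ⟪x', y'⟫ := by
    rw [← InnerProductGeometry.cos_angle_mul_norm_mul_norm,
      ← InnerProductGeometry.cos_angle_mul_norm_mul_norm, h, hx, hy]
  obtain ⟨L, hL⟩ := LinearIsometry.exists_apply_eq_of_inner_eq (v := ![x, y]) (w := ![x', y'])
    (by
      intro i j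
      fin_cases i <;> fin_cases j <;>
        simp [hx, hy, hxy, real_inner_comm x y, real_inner_comm x' y'])
  exact ⟨L, hL 0, hL 1⟩

theorem exists_lipschitzWith_apply_eq_of_angle_eq {k : ℝ≥0} (hk : k ≠ 0) {a b c a' b' c' : V}
    (h : ∠ a' b' c' = ∠ a b c) (ha : dist a' b' = k * dist a b)
    (hc : dist c' b' = k * dist c b) :
    ∃ f : V → V, LipschitzWith k f ∧ f a = a' ∧ f b = b' ∧ f c = c' := by
  have hk₀ : (k : ℝ) ≠ 0 := by exact_mod_cast hk
  obtain ⟨L, hLa, hLc⟩ := LinearIsometry.exists_apply_eq_apply_eq_of_angle_eq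
    (x := a - b) (y := c - b) (x' := (k : ℝ)⁻¹ • (a' - b')) (y' := (k : ℝ)⁻¹ • (c' - b'))
    (by rw [norm_smul, norm_inv, NNReal.norm_eq, ← dist_eq_norm, ha, inv_mul_cancel_left₀ hk₀,
      dist_eq_norm])
    (by rw [norm_smul, norm_inv, NNReal.norm_eq, ← dist_eq_norm, hc, inv_mul_cancel_left₀ hk₀,
      dist_eq_norm])
    (by rw [InnerProductGeometry.angle_smul_smul (inv_ne_zero hk₀)]; exact h)
  refine ⟨fun x => b' + (k : ℝ) • L (x - b), ?_, ?_, by simp, ?_⟩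
  · refine LipschitzWith.of_dist_le_mul fun x y => le_of_eq ?_
    rw [dist_add_left, dist_smul₀, dist_eq_norm, ← map_sub, sub_sub_sub_cancel_right, L.norm_map,
      dist_eq_norm]
    simp
  · simp [hLa, hk₀]
  · simp [hLc, hk₀]

end InnerProductSpace

theorem edist_le_hausdorffMeasure_of_isPreconnected {X : Type*} [MetricSpace X]
    [MeasurableSpace X] [BorelSpace X] {K : Set X} (hK : IsPreconnected K) {x y : X}
    (hx : x ∈ K) (hy : y ∈ K) : edist x y ≤ μH[1] K := by
  have hIcc : Set.Icc 0 (dist x y) ⊆ dist x '' K :=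
    (hK.image _ (continuous_const.dist continuous_id).continuousOn).Icc_subset
      ⟨x, hx, dist_self x⟩ ⟨y, hy, rfl⟩
  calc edist x y = μH[1] (Set.Icc 0 (dist x y)) := by
        rw [hausdorffMeasure_real, Real.volume_Icc, sub_zero, edist_dist]
    _ ≤ μH[1] (dist x '' K) := measure_mono hIcc
    _ ≤ (1 : ℝ≥0) ^ (1 : ℝ) * μH[1] K :=
        (LipschitzWith.dist_right x).hausdorffMeasure_image_le zero_le_one K
    _ = μH[1] K := by simp

def connectingLengths (X Y Z : Plane) : Set ℝ≥0∞ :=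
  {m | ∃ K : Set Plane, IsCompact K ∧ IsConnected K ∧ ({X, Y, Z} : Set Plane) ⊆ K ∧ m = μH[1] K}

theorem steinerLength_eq_toReal_sInf (X Y Z : Plane) :
    SteinerLength X Y Z = (sInf (connectingLengths X Y Z)).toReal := rfl

theorem edist_le_sInf_connectingLengths (X Y Z : Plane) :
    edist X Y ≤ sInf (connectingLengths X Y Z) :=
  le_sInf <| by
    rintro _ ⟨K, -, hK, hXYZ, rfl⟩
    exact edist_le_hausdorffMeasure_of_isPreconnected hK.isPreconnected (hXYZ (by simp))
      (hXYZ (by simp))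

theorem segment_union_segment_union_segment_mem_connectingLengths (X Y Z P : Plane) :
    μH[1] (segment ℝ P X ∪ segment ℝ P Y ∪ segment ℝ P Z) ∈ connectingLengths X Y Z := by
  have hcpt (Q : Plane) : IsCompact (segment ℝ P Q) := by
    rw [segment_eq_image_lineMap]
    exact isCompact_Icc.image AffineMap.lineMap_continuous
  have hconn (Q : Plane) : IsConnected (segment ℝ P Q) :=
    (convex_segment P Q).isConnected ⟨P, left_mem_segment ℝ P Q⟩
  refine ⟨_, ?_, ?_, ?_, rfl⟩
  · exact ((hcpt X).union (hcpt Y)).union (hcpt Z)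
  · exact ((hconn X).union ⟨P, left_mem_segment ℝ P X, left_mem_segment ℝ P Y⟩ (hconn Y)).union
      ⟨P, Or.inl (left_mem_segment ℝ P X), left_mem_segment ℝ P Z⟩ (hconn Z)
  · rintro Q (rfl | rfl | rfl)
    · exact Or.inl (Or.inl (right_mem_segment ℝ P Q))
    · exact Or.inl (Or.inr (right_mem_segment ℝ P Q))
    · exact Or.inr (right_mem_segment ℝ P Q)

theorem sInf_connectingLengths_le (X Y Z P : Plane) :
    sInf (connectingLengths X Y Z) ≤ edist P X + edist P Y + edist P Z :=
  calc sInf (connectingLengths X Y Z)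
      ≤ μH[1] (segment ℝ P X ∪ segment ℝ P Y ∪ segment ℝ P Z) :=
        sInf_le (segment_union_segment_union_segment_mem_connectingLengths X Y Z P)
    _ ≤ μH[1] (segment ℝ P X) + μH[1] (segment ℝ P Y) + μH[1] (segment ℝ P Z) :=
        (measure_union_le _ _).trans (by gcongr; exact measure_union_le _ _)
    _ = edist P X + edist P Y + edist P Z := by simp only [hausdorffMeasure_segment]

theorem sInf_connectingLengths_ne_top (X Y Z : Plane) : sInf (connectingLengths X Y Z) ≠ ∞ :=
  ne_top_of_le_ne_top (by simp [edist_ne_top]) (sInf_connectingLengths_le X Y Z X)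

theorem sInf_connectingLengths_image_le {f : Plane → Plane} {k : ℝ≥0} (hf : LipschitzWith k f)
    (X Y Z : Plane) :
    sInf (connectingLengths (f X) (f Y) (f Z)) ≤ k * sInf (connectingLengths X Y Z) := by
  have : Nonempty (connectingLengths X Y Z) :=
    ⟨⟨_, segment_union_segment_union_segment_mem_connectingLengths X Y Z X⟩⟩
  calc sInf (connectingLengths (f X) (f Y) (f Z))
      ≤ ⨅ m : connectingLengths X Y Z, k * (m : ℝ≥0∞) := by
        refine le_iInf ?_
        rintro ⟨_, K, hKc, hKconn, hXYZ, rfl⟩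
        have hsub : {f X, f Y, f Z} ⊆ f '' K := by
          simpa only [Set.image_insert_eq, Set.image_singleton] using Set.image_mono hXYZ
        have hmem : μH[1] (f '' K) ∈ connectingLengths (f X) (f Y) (f Z) :=
          ⟨f '' K, hKc.image hf.continuous, hKconn.image f hf.continuous.continuousOn, hsub, rfl⟩
        simpa using (sInf_le hmem).trans (hf.hausdorffMeasure_image_le zero_le_one K)
    _ = k * sInf (connectingLengths X Y Z) := by
        rw [sInf_eq_iInf', ENNReal.mul_iInf (by simp)]

theorem dist_le_steinerLength (X Y Z : Plane) : dist X Y ≤ SteinerLength X Y Z := by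
  rw [steinerLength_eq_toReal_sInf, dist_edist]
  exact ENNReal.toReal_mono (sInf_connectingLengths_ne_top X Y Z)
    (edist_le_sInf_connectingLengths X Y Z)

theorem steinerLength_le (X Y Z P : Plane) :
    SteinerLength X Y Z ≤ dist P X + dist P Y + dist P Z := by
  rw [steinerLength_eq_toReal_sInf]
  refine ENNReal.toReal_le_of_le_ofReal (by positivity) ?_
  simpa only [edist_dist, ENNReal.ofReal_add, dist_nonneg, add_nonneg]
    using sInf_connectingLengths_le X Y Z P

theorem steinerLength_image_le {f : Plane → Plane} {k : ℝ≥0} (hf : LipschitzWith k f)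
    (X Y Z : Plane) : SteinerLength (f X) (f Y) (f Z) ≤ k * SteinerLength X Y Z := by
  rw [steinerLength_eq_toReal_sInf, steinerLength_eq_toReal_sInf, ← ENNReal.coe_toReal,
    ← ENNReal.toReal_mul]
  exact ENNReal.toReal_mono
    (ENNReal.mul_ne_top ENNReal.coe_ne_top (sInf_connectingLengths_ne_top X Y Z))
    (sInf_connectingLengths_image_le hf X Y Z)

theorem steinerLength_eq_mul_of_angle_eq {k : ℝ≥0} (hk : k ≠ 0) {A B C A' B' C' : Plane}
    (h : ∠ A' B' C' = ∠ A B C) (hA : dist A' B' = k * dist A B)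
    (hC : dist C' B' = k * dist C B) : SteinerLength A' B' C' = k * SteinerLength A B C := by
  obtain ⟨f, hf, rfl, rfl, rfl⟩ := exists_lipschitzWith_apply_eq_of_angle_eq hk h hA hC
  have hk₀ : (k : ℝ) ≠ 0 := by exact_mod_cast hk
  have hinv (X Y : Plane) (hXY : dist (f X) (f Y) = k * dist X Y) :
      dist X Y = ↑k⁻¹ * dist (f X) (f Y) := by
    rw [hXY, NNReal.coe_inv, inv_mul_cancel_left₀ hk₀]
  obtain ⟨g, hg, hgA, hgB, hgC⟩ :=
    exists_lipschitzWith_apply_eq_of_angle_eq (inv_ne_zero hk) h.symm (hinv A B hA) (hinv C B hC)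
  have hback := steinerLength_image_le hg (f A) (f B) (f C)
  rw [hgA, hgB, hgC, NNReal.coe_inv] at hback
  refine le_antisymm (steinerLength_image_le hf A B C) ?_
  calc (k : ℝ) * SteinerLength A B C
      ≤ k * ((k : ℝ)⁻¹ * SteinerLength (f A) (f B) (f C)) := by gcongr
    _ = SteinerLength (f A) (f B) (f C) := mul_inv_cancel_left₀ hk₀ _

theorem steinerLength_lt_dist_add_dist {A B C : Plane} (hA : A ≠ B) (hC : C ≠ B)
    (h : ∠ A B C < 2 * π / 3) : SteinerLength A B C < dist A B + dist B C := by
  obtain ⟨P, hP⟩ := exists_dist_add_dist_add_dist_lt hA hC h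
  calc SteinerLength A B C ≤ dist P A + dist P B + dist P C := steinerLength_le A B C P
    _ < dist B A + dist B C := hP
    _ = dist A B + dist B C := by rw [dist_comm]

theorem steiner_deficit_depends_only_on_angles_general
    (A B C A' B' C' : Plane)
    (hAB : A ≠ B) (hAB' : A' ≠ B')
    (hiso : dist A B = dist B C) (hiso' : dist A' B' = dist B' C')
    (hangB : ∠ A B C = ∠ A' B' C')
    (hB : ∠ A B C < 2 * Real.pi / 3) :
    (2 * dist A B - SteinerLength A B C) / dist A B =
      (2 * dist A' B' - SteinerLength A' B' C') / dist A' B' ∧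
    0 < 2 * dist A B - SteinerLength A B C ∧
    2 * dist A B - SteinerLength A B C < 2 * dist A B := by
  have hAB₀ : 0 < dist A B := dist_pos.2 hAB
  set k : ℝ≥0 := nndist A' B' / nndist A B
  have hk : dist A' B' = k * dist A B := by
    simp only [k, NNReal.coe_div, coe_nndist]
    field_simp
  have hk₀ : k ≠ 0 := div_ne_zero (nndist_eq_zero.not.2 hAB') (nndist_eq_zero.not.2 hAB)
  have hscale : SteinerLength A' B' C' = k * SteinerLength A B C :=
    steinerLength_eq_mul_of_angle_eq hk₀ hangB.symm hk
      (by rw [dist_comm C', dist_comm C, ← hiso', ← hiso, hk])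
  have hlt := steinerLength_lt_dist_add_dist hAB (dist_pos.1 (hiso ▸ hAB₀)).symm hB
  have hge := dist_le_steinerLength A B C
  refine ⟨?_, by linarith, by linarith⟩
  rw [hscale, hk]
  field_simp

/-- for an isosceles triangle with all angles `< 2π/3`, the normalized
Steiner deficit `(2|AB| − m(A,B,C))/|AB|` depends only on the angles of the triangle,
and is strictly between `0` and `2`. -/
theorem steiner_deficit_depends_only_on_angles
    (A B C A' B' C' : Plane)
    (hAB : A ≠ B) (hBC : B ≠ C) (hAC : A ≠ C)
    (hAB' : A' ≠ B') (hBC' : B' ≠ C') (hAC' : A' ≠ C')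
    (hiso : dist A B = dist B C) (hiso' : dist A' B' = dist B' C')
    (hangB : ∠ A B C = ∠ A' B' C') (hangC : ∠ B C A = ∠ B' C' A')
    (hB : ∠ A B C < 2 * Real.pi / 3) (hC : ∠ B C A < 2 * Real.pi / 3)
    (hA : ∠ C A B < 2 * Real.pi / 3) :
    (2 * dist A B - SteinerLength A B C) / dist A B =
      (2 * dist A' B' - SteinerLength A' B' C') / dist A' B' ∧
    0 < 2 * dist A B - SteinerLength A B C ∧
    2 * dist A B - SteinerLength A B C < 2 * dist A B :=
  steiner_deficit_depends_only_on_angles_general A B C A' B' C' hAB hAB' hiso hiso' hangB hB
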